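/- arXiv:math/0312388 — 3 statements merged into one kernel-verified Lean document; each statement's English description precedes it below -/
import Mathlib

section
/- With the setup of the matrix of moving planes F_{m,1}: under the specialization c̃_{ia} = c_{ia} if a_1 = 0 or a_1 = m, and c̃_{ia} = 0 otherwise, the determinant satisfies det(F_{m,1}(c̃)) = ±Δ^m, where Δ is the determinant of the 4×4 matrix whose i-th row is (c_{i,(0,0)}, c_{i,(m,0)}, c_{i,(0,1)}, c_{i,(m,1)}). -/
open MvPolynomial

/-- Variables `c_{ia}` for `i = 1,…,4` and `a ∈ 𝒜 = {0,…,m} × {0,…,n}`. -/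
abbrev MVar (m n : ℕ) : Type := Fin 4 × Fin (m + 1) × Fin (n + 1)

/-- The coefficient of the monomial `x^b` in `F_i = ∑_{a ∈ 𝒜} c_{ia} x^a`:
it is the variable `c_{ib}` if `b ∈ 𝒜`, and `0` otherwise. -/
noncomputable def Fcoeff (R : Type) [CommRing R] (m n : ℕ) (i : Fin 4) (b : ℤ × ℤ) :
    MvPolynomial (MVar m n) R :=
  if h : 0 ≤ b.1 ∧ b.1 ≤ (m : ℤ) ∧ 0 ≤ b.2 ∧ b.2 ≤ (n : ℤ) then
    X (i, ⟨b.1.toNat, by omega⟩, ⟨b.2.toNat, by omega⟩)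
  else 0

/-- The determinant of the `4mn × 4mn` matrix `F_{m,n}` of the map
`(S_{m-1,n-1})⁴ → S_{2m-1,2n-1}`, `(A₁,…,A₄) ↦ ∑ Aᵢ Fᵢ`, in the monomial bases:
the row indexed by `x^a Fᵢ` (with `a ∈ {0,…,m-1} × {0,…,n-1}`) has, in the column
of the monomial `x^b` (with `b ∈ {0,…,2m-1} × {0,…,2n-1}`), the entry `c_{i,b-a}`
(or `0`).  The bijection `e` fixes an identification of rows and columns, which
only affects the determinant by a sign. -/
noncomputable def Fdet (R : Type) [CommRing R] (m n : ℕ)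
    (e : Fin (2 * m) × Fin (2 * n) ≃ Fin 4 × Fin m × Fin n) :
    MvPolynomial (MVar m n) R :=
  Matrix.det (Matrix.of fun r c =>
    Fcoeff R m n (e r).1 ((c.1 : ℤ) - (((e r).2.1 : ℕ) : ℤ), (c.2 : ℤ) - (((e r).2.2 : ℕ) : ℤ)))


/-- The determinant `Δ` of the 4×4 matrix whose `i`-th row is
`(c_{i,(0,0)}, c_{i,(m,0)}, c_{i,(0,n)}, c_{i,(m,n)})`. -/
noncomputable def cornerDet (R : Type) [CommRing R] (m n : ℕ) : MvPolynomial (MVar m n) R :=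
  Matrix.det (Matrix.of fun (i j : Fin 4) =>
    X (i, ![((0 : Fin (m + 1)), (0 : Fin (n + 1))), (Fin.last m, 0), (0, Fin.last n),
            (Fin.last m, Fin.last n)] j))

/-- The specialization `c̃`: it keeps `c_{ia}` when `a₁ = 0` or `a₁ = m`,
and sends all the other variables to `0`. -/
noncomputable def edgeSpec (m n : ℕ) :
    MvPolynomial (MVar m n) ℤ →ₐ[ℤ] MvPolynomial (MVar m n) ℤ :=
  aeval (fun v => if v.2.1 = 0 ∨ v.2.1 = Fin.last m then X v else 0)

/-- column reindexing -/
def colEquiv (m : ℕ) : Fin (2*m) × Fin 2 ≃ Fin 4 × Fin m where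
  toFun c := (⟨(if (c.1:ℕ) < m then 0 else 1) + 2 * (c.2:ℕ), by have := c.2.isLt; split <;> omega⟩,
              ⟨if (c.1:ℕ) < m then (c.1:ℕ) else (c.1:ℕ) - m, by have := c.1.isLt; split <;> omega⟩)
  invFun p := (⟨((p.1:ℕ) % 2) * m + (p.2:ℕ), by
                 have h2 := p.2.isLt
                 rcases Nat.mod_two_eq_zero_or_one (p.1:ℕ) with h | h <;> rw [h] <;> omega⟩,
               ⟨(p.1:ℕ)/2, by have := p.1.isLt; omega⟩)
  left_inv c := by
    rcases c with ⟨⟨c1,h1⟩,⟨c2,h2⟩⟩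
    by_cases hc : c1 < m <;>
      simp only [hc, if_true, if_false, Prod.mk.injEq, Fin.mk.injEq, Fin.ext_iff] <;>
      constructor <;> interval_cases c2 <;> simp <;> omega
  right_inv p := by
    rcases p with ⟨⟨j,hj⟩,⟨k,hk⟩⟩
    interval_cases j <;>
      simp only [Prod.mk.injEq, Fin.mk.injEq, Fin.ext_iff] <;> norm_num <;> omega

/-- row reindexing -/
def rowEquiv (m : ℕ) (e : Fin (2 * m) × Fin (2 * 1) ≃ Fin 4 × Fin m × Fin 1) :
    Fin (2*m) × Fin 2 ≃ Fin 4 × Fin m where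
  toFun r := ((e r).1, (e r).2.1)
  invFun p := e.symm (p.1, p.2, 0)
  left_inv r := by
    have h : ((e r).1, (e r).2.1, (0:Fin 1)) = e r := by
      rcases h : e r with ⟨i, a, t⟩
      simp [Subsingleton.elim (0:Fin 1) t]
    dsimp only
    rw [h, e.symm_apply_apply]
  right_inv p := by
    rcases p with ⟨i, a⟩
    dsimp only
    rw [e.apply_symm_apply]

noncomputable def Dmat (m : ℕ) : Matrix (Fin 4) (Fin 4) (MvPolynomial (MVar m 1) ℤ) :=
  Matrix.of fun (i j : Fin 4) =>
    X (i, ![((0 : Fin (m + 1)), (0 : Fin (1 + 1))), (Fin.last m, 0), (0, Fin.last 1),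
            (Fin.last m, Fin.last 1)] j)

lemma map_eq (m : ℕ) (e : Fin (2 * m) × Fin (2 * 1) ≃ Fin 4 × Fin m × Fin 1) :
    (Matrix.of fun r c =>
      Fcoeff ℤ m 1 (e r).1 ((c.1 : ℤ) - (((e r).2.1 : ℕ) : ℤ),
        (c.2 : ℤ) - (((e r).2.2 : ℕ) : ℤ))).map (edgeSpec m 1)
    = (Matrix.blockDiagonal fun _ : Fin m => Dmat m).submatrix (rowEquiv m e) (colEquiv m) := by
  refine Matrix.ext fun r c => ?_
  rcases hr : e r with ⟨i, ⟨a, ha⟩, t⟩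
  rcases c with ⟨⟨c1, hc1⟩, ⟨c2, hc2⟩⟩
  have ht : (t : ℕ) = 0 := by omega
  simp only [Matrix.map_apply, Matrix.of_apply, Matrix.submatrix_apply, hr,
    rowEquiv, colEquiv, Equiv.coe_fn_mk, Matrix.blockDiagonal_apply, ht]
  by_cases h0 : c1 = a
  · -- c1 = a : variable X (i, 0, c2)
    subst h0
    rw [Fcoeff, dif_pos (by constructor <;> [omega; constructor <;> [omega; omega]])]
    have hlt : c1 < m := by omega
    simp only [hlt, if_true]
    interval_cases c2 <;>
      · simp only [edgeSpec, aeval_X]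
        rw [if_pos (Or.inl (by apply Fin.ext; simp))]
        simp [Dmat, X, Fin.ext_iff, Fin.last]
  · by_cases h1 : c1 = a + m
    · subst h1
      rw [Fcoeff, dif_pos (by constructor <;> [omega; constructor <;> [omega; omega]])]
      have hlt : ¬ (a + m < m) := by omega
      simp only [hlt, if_false]
      rw [if_pos (by apply Fin.ext; simp)]
      interval_cases c2 <;>
        · simp only [edgeSpec, aeval_X]
          rw [if_pos (Or.inr (by apply Fin.ext; simp))]
          simp [Dmat, X, Fin.ext_iff, Fin.last]
    · -- entry is zero on both sides
      rw [if_neg (by simp [Fin.ext_iff]; split <;> omega)]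
      rw [Fcoeff]
      split
      · -- 0 ≤ c1 - a ≤ m but c1 ≠ a, a+m : killed by edgeSpec
        simp only [edgeSpec, aeval_X]
        rw [if_neg]
        push_neg
        constructor <;> · intro hE; rw [Fin.ext_iff] at hE; simp at hE; omega
      · simp

/-- `det(F_{m,1}(c̃)) = ± Δ^m` where `Δ` is the determinant of the
4×4 matrix with rows `(c_{i,(0,0)}, c_{i,(m,0)}, c_{i,(0,1)}, c_{i,(m,1)})`. -/
theorem det_Fm1_edgeSpec (m : ℕ) (hm : 1 ≤ m)
    (e : Fin (2 * m) × Fin (2 * 1) ≃ Fin 4 × Fin m × Fin 1) :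
    edgeSpec m 1 (Fdet ℤ m 1 e) = cornerDet ℤ m 1 ^ m ∨
    edgeSpec m 1 (Fdet ℤ m 1 e) = -(cornerDet ℤ m 1 ^ m) := by
  have hD : cornerDet ℤ m 1 = (Dmat m).det := rfl
  set A := Matrix.blockDiagonal fun _ : Fin m => Dmat m with hA
  set ρ := rowEquiv m e
  set σ := colEquiv m
  have h1 : edgeSpec m 1 (Fdet ℤ m 1 e) = (A.submatrix ρ σ).det := by
    rw [Fdet, ← map_eq m e]
    have := RingHom.map_det (edgeSpec m 1).toRingHom (Matrix.of fun r c =>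
      Fcoeff ℤ m 1 (e r).1 ((c.1 : ℤ) - (((e r).2.1 : ℕ) : ℤ),
        (c.2 : ℤ) - (((e r).2.2 : ℕ) : ℤ)))
    simpa [RingHom.mapMatrix_apply, AlgHom.toRingHom_eq_coe, AlgHom.coe_toRingHom,
      Matrix.map] using this
  have h2 : A.submatrix ρ σ = (A.submatrix σ σ).submatrix (ρ.trans σ.symm) id := by
    refine Matrix.ext fun r c => ?_
    simp [Matrix.submatrix_apply]
  have h3 : (A.submatrix ρ σ).det
      = (Equiv.Perm.sign ((ρ.trans σ.symm : Equiv.Perm _)) : ℤ) * A.det := by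
    rw [h2]
    rw [Matrix.det_permute (ρ.trans σ.symm) (A.submatrix σ σ)]
    rw [Matrix.det_submatrix_equiv_self]
  have h4 : A.det = cornerDet ℤ m 1 ^ m := by
    rw [hA, Matrix.det_blockDiagonal, hD]
    simp
  rw [h1, h3, h4]
  rcases Int.units_eq_one_or (Equiv.Perm.sign (ρ.trans σ.symm : Equiv.Perm _)) with h | h <;>
    rw [h] <;> simp
end

section
/- Assign to each variable c_{ia} the weight ω(c_{ia}) := a_1 (the first coordinate of a). Then det(F_{m,n}) is isobaric of ω-degree 2m²n with respect to this weighting. -/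
open MvPolynomial

section Aux

open Finset

lemma weight_intCast' {σ : Type*} (w : σ → ℕ) (d : σ →₀ ℕ) :
    ((Finsupp.weight w d : ℕ) : ℤ) = Finsupp.weight (fun i => (w i : ℤ)) d := by
  simp only [Finsupp.weight_apply, Finsupp.sum, smul_eq_mul]
  push_cast
  rfl

lemma isWH_of_int' {σ : Type*} (w : σ → ℕ) (φ : MvPolynomial σ ℤ) (d : ℕ)
    (h : IsWeightedHomogeneous (fun i => (w i : ℤ)) φ (d : ℤ)) :
    IsWeightedHomogeneous w φ d := by
  intro c hc
  have h2 := weight_intCast' w c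
  rw [h hc] at h2
  exact_mod_cast h2

lemma det_isWH' {σ ι : Type*} [Fintype ι] [DecidableEq ι]
    (w : σ → ℤ) (A : Matrix ι ι (MvPolynomial σ ℤ)) (f g : ι → ℤ)
    (h : ∀ r c, IsWeightedHomogeneous w (A r c) (f c - g r)) :
    IsWeightedHomogeneous w A.det (∑ c, f c - ∑ r, g r) := by
  rw [Matrix.det_apply, ← mem_weightedHomogeneousSubmodule]
  apply Submodule.sum_mem
  intro σ' _
  rw [Units.smul_def]
  apply Submodule.smul_mem
  rw [mem_weightedHomogeneousSubmodule]
  have hd : (∑ c, f c - ∑ r, g r) = ∑ i, (f i - g (σ' i)) := by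
    rw [Finset.sum_sub_distrib, Equiv.sum_comp σ' g]
  rw [hd]
  exact IsWeightedHomogeneous.prod _ _ _ (fun i _ => h (σ' i) i)

lemma sum_fin_int (k : ℕ) : (∑ i : Fin k, (i : ℤ)) = ∑ i ∈ range k, (i : ℤ) := by
  rw [Fin.sum_univ_eq_sum_range]

lemma sum_range_double (m : ℕ) :
    (∑ i ∈ range (2 * m), (i : ℤ)) = 2 * (∑ i ∈ range m, (i : ℤ)) + m * m := by
  rw [two_mul, Finset.sum_range_add]
  have : (∑ i ∈ range m, ((m + i : ℕ) : ℤ)) = (∑ i ∈ range m, (i : ℤ)) + m * m := by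
    push_cast
    rw [Finset.sum_add_distrib, Finset.sum_const, Finset.card_range]
    ring
  rw [this]; ring

end Aux

/-- with respect to the weight `ω(c_{ia}) := a₁`, the determinant
`det(F_{m,n})` is isobaric of ω-degree `2m²n`. -/
theorem det_movingPlanes_isobaric (m n : ℕ)
    (e : Fin (2 * m) × Fin (2 * n) ≃ Fin 4 × Fin m × Fin n) :
    IsWeightedHomogeneous (fun v : MVar m n => (v.2.1 : ℕ)) (Fdet ℤ m n e) (2 * m ^ 2 * n) := by
  apply isWH_of_int'
  unfold Fdet
  have key := det_isWH' (fun v : MVar m n => ((v.2.1 : ℕ) : ℤ))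
    (Matrix.of fun r c =>
      Fcoeff ℤ m n (e r).1 ((c.1 : ℤ) - (((e r).2.1 : ℕ) : ℤ),
        (c.2 : ℤ) - (((e r).2.2 : ℕ) : ℤ)))
    (fun c : Fin (2 * m) × Fin (2 * n) => (c.1 : ℤ))
    (fun r : Fin (2 * m) × Fin (2 * n) => (((e r).2.1 : ℕ) : ℤ))
    (by
      intro r c
      simp only [Matrix.of_apply]
      unfold Fcoeff
      split_ifs with h
      · have hx := isWeightedHomogeneous_X ℤ (fun v : MVar m n => ((v.2.1 : ℕ) : ℤ))
          ((e r).1, (⟨((c.1 : ℤ) - (((e r).2.1 : ℕ) : ℤ)).toNat, by omega⟩ : Fin (m + 1)),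
            (⟨((c.2 : ℤ) - (((e r).2.2 : ℕ) : ℤ)).toNat, by omega⟩ : Fin (n + 1)))
        convert hx using 1
        simp only []
        rw [Int.toNat_of_nonneg h.1]
      · exact isWeightedHomogeneous_zero _ _ _)
  convert key using 1
  rw [Equiv.sum_comp e (fun v : Fin 4 × Fin m × Fin n => ((v.2.1 : ℕ) : ℤ))]
  rw [Fintype.sum_prod_type, Fintype.sum_prod_type]
  simp only [Finset.sum_const, Finset.card_univ, Fintype.card_fin, nsmul_eq_mul]
  rw [Fintype.sum_prod_type]
  simp only [Finset.sum_const, Finset.card_univ, Fintype.card_fin, nsmul_eq_mul]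
  have h1 : (∑ x : Fin (2 * m), (2 * n) * (x : ℤ)) = (2 * n) * ∑ x : Fin (2 * m), (x : ℤ) := by
    rw [Finset.mul_sum]
  push_cast
  rw [← Finset.mul_sum, ← Finset.mul_sum, sum_fin_int, sum_fin_int, sum_range_double]
  ring
end

section
/- det(F_{m,n}) is a nonzero polynomial of content 1 in ℤ[c_{ia}]; that is, the gcd of its integer coefficients is 1. -/
open MvPolynomial

/-- The corner evaluation point: `F₁ = 1`, `F₂ = xᵐ`, `F₃ = yⁿ`, `F₄ = xᵐyⁿ`. -/
def cornerVal (m n : ℕ) : MVar m n → ℤ :=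
  fun v =>
    if v.2.1.val = (if v.1.val % 2 = 1 then m else 0) ∧
        v.2.2.val = (if v.1.val / 2 = 1 then n else 0) then 1 else 0

/-- The bijection of monomial bases induced by the corner specialization. -/
def cornerMap (m n : ℕ) : Fin 4 × Fin m × Fin n → Fin (2 * m) × Fin (2 * n) :=
  fun x =>
    (⟨x.2.1.val + (if x.1.val % 2 = 1 then m else 0), by
        have := x.2.1.isLt; split <;> omega⟩,
     ⟨x.2.2.val + (if x.1.val / 2 = 1 then n else 0), by
        have := x.2.2.isLt; split <;> omega⟩)

lemma cornerMap_injective (m n : ℕ) : Function.Injective (cornerMap m n) := by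
  rintro ⟨i, a, b⟩ ⟨j, c, d⟩ h
  simp only [cornerMap, Prod.mk.injEq, Fin.mk.injEq] at h
  have hi := i.isLt
  have hj := j.isLt
  have ha := a.isLt
  have hb := b.isLt
  have hc := c.isLt
  have hd := d.isLt
  have : i.val = j.val ∧ a.val = c.val ∧ b.val = d.val := by
    split_ifs at h <;> omega
  simp [Prod.ext_iff, Fin.ext_iff, this.1, this.2.1, this.2.2]

noncomputable def cornerEquiv (m n : ℕ) : (Fin 4 × Fin m × Fin n) ≃ (Fin (2 * m) × Fin (2 * n)) :=
  Equiv.ofBijective (cornerMap m n)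
    ((Fintype.bijective_iff_injective_and_card _).2
      ⟨cornerMap_injective m n, by simp [Fintype.card_prod]; ring⟩)

lemma eval_Fcoeff (m n : ℕ) (i : Fin 4) (a : Fin m) (b : Fin n)
    (p : Fin (2 * m)) (q : Fin (2 * n)) :
    eval (cornerVal m n)
        (Fcoeff ℤ m n i ((p : ℤ) - ((a : ℕ) : ℤ), (q : ℤ) - ((b : ℕ) : ℤ))) =
      if cornerMap m n (i, a, b) = (p, q) then 1 else 0 := by
  have hp := p.isLt
  have hq := q.isLt
  have ha := a.isLt
  have hb := b.isLt
  unfold Fcoeff cornerVal cornerMap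
  dsimp only
  split_ifs with h1 <;>
    simp only [eval_X, map_zero, Prod.mk.injEq, Fin.mk.injEq, Fin.ext_iff, Fin.val_mk] <;>
    split_ifs <;> first | rfl | omega

/-- for `m, n ≥ 1`, `det(F_{m,n})` is a nonzero polynomial of content `1`
in `ℤ[c_{ia}]`: the gcd of its integer coefficients is `1`, i.e. every common divisor
of its coefficients is a unit. -/
theorem det_movingPlanes_ne_zero_content_one (m n : ℕ) (hm : 1 ≤ m) (hn : 1 ≤ n)
    (e : Fin (2 * m) × Fin (2 * n) ≃ Fin 4 × Fin m × Fin n) :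
    Fdet ℤ m n e ≠ 0 ∧
      ∀ d : ℤ, (∀ s : MVar m n →₀ ℕ, d ∣ coeff s (Fdet ℤ m n e)) → IsUnit d := by
  classical
  set σ : Equiv.Perm (Fin (2 * m) × Fin (2 * n)) := e.trans (cornerEquiv m n) with hσ
  have hdet : eval (cornerVal m n) (Fdet ℤ m n e) = Matrix.det σ.toPEquiv.toMatrix := by
    rw [Fdet, RingHom.map_det]
    congr 1
    ext r c
    obtain ⟨p, q⟩ := c
    rw [RingHom.mapMatrix_apply, Matrix.map_apply, Matrix.of_apply,
      eval_Fcoeff m n (e r).1 (e r).2.1 (e r).2.2 p q,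
      PEquiv.toMatrix_apply, Equiv.toPEquiv_apply]
    exact if_congr ⟨fun h => Option.mem_some_iff.mpr h,
      fun h => Option.mem_some_iff.mp h⟩ rfl rfl
  have hunit : IsUnit (eval (cornerVal m n) (Fdet ℤ m n e)) := by
    rw [hdet, Matrix.det_permutation]
    exact (Equiv.Perm.sign σ).isUnit
  constructor
  · intro h
    rw [h] at hunit
    simp at hunit
  · intro d hd
    refine isUnit_of_dvd_unit ?_ hunit
    rw [eval_eq]
    exact Finset.dvd_sum fun s _ => (hd s).mul_right _
end
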